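/- arXiv:2603.15813 — 5 statements merged into one kernel-verified Lean document; each statement's English description precedes it below -/
import Mathlib

section
/- Let $n \ge 1$ and let $G$ be a finite subgroup of $\mathrm{GL}_n(\mathbb{C})$. Then $G$ has an abelian normal subgroup $A$ such that the index $[G : A] \le 25^{n^2} - 9^{n^2}$. -/
/-!
Average `star g * g` over the finite group and take a square root of the result (Weyl's trick)
to make every element unitary. For unitaries, `‖⁅u, v⁆ - 1‖ ≤ 2 ‖u - 1‖ ‖v - 1‖`, and a descent
on `‖y - 1‖` shows that elements within `1/2` of the identity commute; the conjugation-invariant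
set of such elements thus generates an abelian normal subgroup `N`. Representatives of distinct
cosets of `N` are `1/2`-apart unit vectors in a real space of dimension `2 n²`, and the disjoint
balls of radius `1/4` around them lie in the shell `3/4 < ‖z‖ < 5/4`, so there are at most
`5 ^ (2 n²) - 3 ^ (2 n²)` cosets.
-/

open MeasureTheory Metric Module
open scoped commutatorElement

section Packing

variable {E : Type*} [NormedAddCommGroup E] [NormedSpace ℝ E] [FiniteDimensional ℝ E]

theorem card_mul_pow_add_pow_le_of_sphere_separated {ε : ℝ} (hε : 0 < ε) (hε1 : ε ≤ 1)
    (s : Finset E) (hs : ∀ x ∈ s, ‖x‖ = 1)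
    (hsep : ∀ x ∈ s, ∀ y ∈ s, x ≠ y → 2 * ε ≤ ‖x - y‖) :
    s.card * ε ^ finrank ℝ E + (1 - ε) ^ finrank ℝ E ≤ (1 + ε) ^ finrank ℝ E := by
  rcases s.eq_empty_or_nonempty with rfl | ⟨x₀, hx₀⟩
  · simpa using pow_le_pow_left₀ (by linarith) (by linarith) _
  have : Nontrivial E := ⟨⟨x₀, 0, norm_ne_zero_iff.1 (by simp [hs x₀ hx₀])⟩⟩
  borelize E
  let μ : Measure E := Measure.addHaar
  have hball (x : E) {r : ℝ} (hr : 0 ≤ r) :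
      μ.real (ball x r) = r ^ finrank ℝ E * μ.real (ball 0 1) := by
    simp [measureReal_def, μ.addHaar_ball x hr, ENNReal.toReal_ofReal (pow_nonneg hr _)]
  have hdisj : (s : Set E).PairwiseDisjoint (ball · ε) := fun x hx y hy hxy =>
    ball_disjoint_ball (by rw [dist_eq_norm]; linarith [hsep x hx y hy hxy])
  have hshell : Disjoint (⋃ x ∈ s, ball x ε) (ball 0 (1 - ε)) := by
    refine Set.disjoint_iUnion₂_left.2 fun x hx => ball_disjoint_ball ?_
    rw [dist_zero_right, hs x hx]; linarith
  have hsub : (⋃ x ∈ s, ball x ε) ∪ ball 0 (1 - ε) ⊆ ball (0 : E) (1 + ε) := by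
    refine Set.union_subset (Set.iUnion₂_subset fun x hx => ball_subset_ball' ?_)
      (ball_subset_ball (by linarith))
    rw [dist_zero_right, hs x hx]; linarith
  have hvol := measureReal_mono (μ := μ) hsub
  have hfin : μ (⋃ x ∈ s, ball x ε) ≠ ⊤ :=
    ((measure_mono (Set.subset_union_left.trans hsub)).trans_lt measure_ball_lt_top).ne
  rw [measureReal_union hshell measurableSet_ball hfin,
    measureReal_biUnion_finset hdisj fun _ _ => measurableSet_ball,
    Finset.sum_congr rfl fun x _ => hball x hε.le, Finset.sum_const, nsmul_eq_mul,
    hball 0 (r := 1 - ε) (by linarith), hball 0 (r := 1 + ε) (by linarith)] at hvol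
  have hpos : 0 < μ.real (ball (0 : E) 1) :=
    ENNReal.toReal_pos (measure_ball_pos μ 0 one_pos).ne' measure_ball_lt_top.ne
  nlinarith

theorem card_le_five_pow_sub_three_pow_of_sphere_separated (s : Finset E)
    (hs : ∀ x ∈ s, ‖x‖ = 1) (hsep : ∀ x ∈ s, ∀ y ∈ s, x ≠ y → 1 / 2 ≤ ‖x - y‖) :
    s.card ≤ 5 ^ finrank ℝ E - 3 ^ finrank ℝ E := by
  have h := card_mul_pow_add_pow_le_of_sphere_separated (ε := 1 / 4) (by norm_num) (by norm_num)
    s hs (by norm_num; exact hsep)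
  have : (s.card : ℝ) + 3 ^ finrank ℝ E ≤ 5 ^ finrank ℝ E := by
    norm_num [div_pow] at h
    field_simp at h
    linarith
  rw [Nat.le_sub_iff_add_le (Nat.pow_le_pow_left (by norm_num) _)]
  exact_mod_cast this

end Packing

section UnitaryNorm

variable {A : Type*} [NormedRing A] [StarRing A] [CStarRing A]

theorem Unitary.norm_mul_sub_one_le (u v : unitary A) :
    ‖((u * v : unitary A) : A) - 1‖ ≤ ‖(u : A) - 1‖ + ‖(v : A) - 1‖ :=
  calc ‖((u * v : unitary A) : A) - 1‖ = ‖(u : A) * ((v : A) - 1) + ((u : A) - 1)‖ := by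
        rw [Submonoid.coe_mul]; noncomm_ring
    _ ≤ ‖(v : A) - 1‖ + ‖(u : A) - 1‖ := by
        grw [norm_add_le, CStarRing.norm_coe_unitary_mul]
    _ = _ := add_comm _ _

theorem Unitary.norm_inv_sub_one (u : unitary A) :
    ‖((u⁻¹ : unitary A) : A) - 1‖ = ‖(u : A) - 1‖ := by
  rw [← CStarRing.norm_coe_unitary_mul u, mul_sub, mul_one, ← Submonoid.coe_mul, mul_inv_cancel,
    OneMemClass.coe_one, norm_sub_rev]

theorem Unitary.norm_conj_sub_one (u v : unitary A) :
    ‖((u * v * u⁻¹ : unitary A) : A) - 1‖ = ‖(v : A) - 1‖ := by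
  have : ((u * v * u⁻¹ : unitary A) : A) - 1 = u * ((v : A) - 1) * ((u⁻¹ : unitary A) : A) := by
    rw [mul_sub, sub_mul, mul_one, ← Submonoid.coe_mul, ← Submonoid.coe_mul, ← Submonoid.coe_mul,
      mul_inv_cancel, OneMemClass.coe_one]
  rw [this, CStarRing.norm_mul_coe_unitary, CStarRing.norm_coe_unitary_mul]

theorem Unitary.norm_commutatorElement_sub_one_le (u v : unitary A) :
    ‖((⁅u, v⁆ : unitary A) : A) - 1‖ ≤ 2 * ‖(u : A) - 1‖ * ‖(v : A) - 1‖ := by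
  have : ((⁅u, v⁆ : unitary A) : A) - 1 =
      (((u : A) - 1) * ((v : A) - 1) - ((v : A) - 1) * ((u : A) - 1)) *
        (((v * u)⁻¹ : unitary A) : A) := by
    have h1 : ⁅u, v⁆ = u * v * (v * u)⁻¹ := by group
    have h2 : (v : A) * u * (((v * u)⁻¹ : unitary A) : A) = 1 := by
      rw [← Submonoid.coe_mul, ← Submonoid.coe_mul, mul_inv_cancel, OneMemClass.coe_one]
    have h3 : ((u : A) - 1) * ((v : A) - 1) - ((v : A) - 1) * ((u : A) - 1) = u * v - v * u := by
      noncomm_ring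
    rw [h3, sub_mul, h2, h1, Submonoid.coe_mul, Submonoid.coe_mul]
  rw [this, CStarRing.norm_mul_coe_unitary]
  calc _ ≤ ‖((u : A) - 1) * ((v : A) - 1)‖ + ‖((v : A) - 1) * ((u : A) - 1)‖ := norm_sub_le _ _
    _ ≤ ‖(u : A) - 1‖ * ‖(v : A) - 1‖ + ‖(v : A) - 1‖ * ‖(u : A) - 1‖ := by
        grw [norm_mul_le, norm_mul_le]
    _ = _ := by ring

theorem Unitary.norm_coe_sub_coe (u v : unitary A) :
    ‖(u : A) - v‖ = ‖((u⁻¹ * v : unitary A) : A) - 1‖ := by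
  rw [← CStarRing.norm_coe_unitary_mul u⁻¹, mul_sub, ← Submonoid.coe_mul, ← Submonoid.coe_mul,
    inv_mul_cancel, OneMemClass.coe_one, norm_sub_rev]

end UnitaryNorm

theorem eq_one_of_pow_eq_one_of_norm_pow_sub_one_le {R : Type*} [NormedRing R]
    [NormedAlgebra ℝ R] [HasSummableGeomSeries R] {u : R} {N : ℕ} (hN : 0 < N)
    (huN : u ^ N = 1) {r : ℝ} (hr : r < 1) (hu : ∀ k, ‖u ^ k - 1‖ ≤ r) : u = 1 := by
  set P : R := (N : ℝ)⁻¹ • ∑ k ∈ Finset.range N, u ^ k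
  have huP : u * P = P := by
    have h : (u - 1) * ∑ k ∈ Finset.range N, u ^ k = 0 := by rw [mul_geom_sum, huN, sub_self]
    rw [sub_mul, one_mul, sub_eq_zero] at h
    rw [mul_smul_comm, h]
  have hP : ‖1 - P‖ < 1 :=
    calc ‖1 - P‖ = ‖(N : ℝ)⁻¹ • ∑ k ∈ Finset.range N, (1 - u ^ k)‖ := by
          rw [Finset.sum_sub_distrib, smul_sub, Finset.sum_const, Finset.card_range,
            ← Nat.cast_smul_eq_nsmul ℝ, smul_smul, inv_mul_cancel₀ (by positivity), one_smul]
      _ ≤ (N : ℝ)⁻¹ * (N * r) := by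
          rw [norm_smul, Real.norm_of_nonneg (by positivity)]
          gcongr
          refine (norm_sum_le _ _).trans ?_
          simpa using Finset.sum_le_sum (s := Finset.range N) fun k _ =>
            (norm_sub_rev (1 : R) (u ^ k)).trans_le (hu k)
      _ = r := by field_simp
      _ < 1 := hr
  have hPunit : IsUnit P := by simpa using isUnit_one_sub_of_norm_lt_one hP
  exact hPunit.mul_eq_right.1 huP

theorem commutatorElement_pow_left_of_commute {G : Type*} [Group G] {x y : G}
    (h : Commute x ⁅x, y⁆) (k : ℕ) : ⁅x ^ k, y⁆ = ⁅x, y⁆ ^ k := by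
  induction k with
  | zero => simp
  | succ k ih =>
    have hxk : x * ⁅x, y⁆ ^ k = ⁅x, y⁆ ^ k * x := (h.pow_right k).eq
    calc ⁅x ^ (k + 1), y⁆ = x * ⁅x ^ k, y⁆ * x⁻¹ * ⁅x, y⁆ := by
          simp only [commutatorElement_def]; group
      _ = ⁅x, y⁆ ^ (k + 1) := by rw [ih, hxk, pow_succ]; group

section Jordan

variable {G : Type*} [Group G] [Finite G] {A : Type*} [CStarAlgebra A] {ρ : G →* unitary A}

theorem commutatorElement_eq_one_of_commute (hρ : Function.Injective ρ) {x y : G}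
    (hxc : Commute x ⁅x, y⁆) (hy : ‖(ρ y : A) - 1‖ < 1 / 2) : ⁅x, y⁆ = 1 := by
  have hpow (k : ℕ) : ‖(ρ ⁅x, y⁆ : A) ^ k - 1‖ ≤ 2 * ‖(ρ y : A) - 1‖ := by
    have h : ρ ⁅x, y⁆ ^ k = ρ (x ^ k) * ρ y * (ρ (x ^ k))⁻¹ * (ρ y)⁻¹ := by
      rw [← map_pow, ← commutatorElement_pow_left_of_commute hxc, commutatorElement_def]
      simp only [map_mul, map_inv]
    rw [← SubmonoidClass.coe_pow, h]
    grw [Unitary.norm_mul_sub_one_le, Unitary.norm_conj_sub_one, Unitary.norm_inv_sub_one]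
    exact (two_mul _).ge
  have hc : (ρ ⁅x, y⁆ : A) = 1 :=
    eq_one_of_pow_eq_one_of_norm_pow_sub_one_le (orderOf_pos ⁅x, y⁆)
      (by rw [← SubmonoidClass.coe_pow, ← map_pow, pow_orderOf_eq_one, map_one,
        OneMemClass.coe_one]) (by linarith) hpow
  exact (map_eq_one_iff ρ hρ).1 (Subtype.ext hc)

/-- If `y` is a counterexample with `‖ρ y - 1‖` minimal, the commutator `⁅x, y⁆` is closer to
the identity than `y`, hence commutes with `x`, and then it must be trivial. -/
theorem commute_of_norm_sub_one_lt (hρ : Function.Injective ρ) {x y : G}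
    (hx : ‖(ρ x : A) - 1‖ < 1 / 2) (hy : ‖(ρ y : A) - 1‖ < 1 / 2) : Commute x y := by
  by_contra hxy
  obtain ⟨y, ⟨hy, hxy⟩, hmin⟩ := Set.exists_min_image
    {y : G | ‖(ρ y : A) - 1‖ < 1 / 2 ∧ ¬Commute x y} (fun y => ‖(ρ y : A) - 1‖)
    (Set.toFinite _) ⟨y, hy, hxy⟩
  have hy0 : 0 < ‖(ρ y : A) - 1‖ := by
    refine norm_pos_iff.2 (sub_ne_zero.2 fun h => hxy ?_)
    rw [(map_eq_one_iff ρ hρ).1 (Subtype.ext h)]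
    exact Commute.one_right x
  have hc : ‖(ρ ⁅x, y⁆ : A) - 1‖ < ‖(ρ y : A) - 1‖ := by
    rw [map_commutatorElement]
    grw [Unitary.norm_commutatorElement_sub_one_le]
    nlinarith [norm_nonneg ((ρ x : A) - 1)]
  have hxc : Commute x ⁅x, y⁆ := by
    by_contra hxc
    exact hc.not_ge (hmin _ ⟨hc.trans hy, hxc⟩)
  exact hxy (commutatorElement_eq_one_iff_commute.1 (commutatorElement_eq_one_of_commute hρ hxc hy))

variable [Nontrivial A] [FiniteDimensional ℝ A]

theorem index_le_of_setOf_norm_sub_one_lt_subset {N : Subgroup G}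
    (hN : {g | ‖(ρ g : A) - 1‖ < 1 / 2} ⊆ N) :
    N.index ≤ 5 ^ finrank ℝ A - 3 ^ finrank ℝ A := by
  classical
  have : Fintype (G ⧸ N) := Fintype.ofFinite _
  let rep : G ⧸ N → A := fun q => ρ q.out
  have hsep (q₁ q₂ : G ⧸ N) (hne : q₁ ≠ q₂) : 1 / 2 ≤ ‖rep q₁ - rep q₂‖ := by
    rw [Unitary.norm_coe_sub_coe, ← map_inv, ← map_mul]
    refine not_lt.1 fun h => hne ?_
    rw [← QuotientGroup.out_eq' q₁, ← QuotientGroup.out_eq' q₂]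
    exact QuotientGroup.eq.2 (hN h)
  have hinj : Function.Injective rep := fun q₁ q₂ h => by
    by_contra hne
    have := hsep q₁ q₂ hne
    rw [h, sub_self, norm_zero] at this
    norm_num at this
  calc N.index = (Finset.univ.image rep).card := by
        rw [Finset.card_image_of_injective _ hinj, Finset.card_univ, Subgroup.index_eq_card,
          Nat.card_eq_fintype_card]
    _ ≤ _ := by
        refine card_le_five_pow_sub_three_pow_of_sphere_separated _ (by simp [rep]) ?_
        simp only [Finset.mem_image, Finset.mem_univ, true_and]
        rintro _ ⟨q₁, rfl⟩ _ ⟨q₂, rfl⟩ hne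
        exact hsep q₁ q₂ fun h => hne (h ▸ rfl)

theorem exists_normal_isMulCommutative_index_le_of_injective_unitary
    (hρ : Function.Injective ρ) :
    ∃ N : Subgroup G, N.Normal ∧ IsMulCommutative N ∧
      N.index ≤ 5 ^ finrank ℝ A - 3 ^ finrank ℝ A := by
  set S := {g : G | ‖(ρ g : A) - 1‖ < 1 / 2}
  have hS : Group.conjugatesOfSet S ⊆ S := by
    intro g hg
    obtain ⟨a, ha, hconj⟩ := Group.mem_conjugatesOfSet_iff.1 hg
    obtain ⟨c, rfl⟩ := isConj_iff.1 hconj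
    simpa only [S, Set.mem_ofPred_eq, map_mul, map_inv, Unitary.norm_conj_sub_one] using ha
  exact ⟨Subgroup.normalClosure S, inferInstance,
    Subgroup.isMulCommutative_closure fun x hx y hy =>
      (commute_of_norm_sub_one_lt hρ (hS hx) (hS hy)).eq,
    index_le_of_setOf_norm_sub_one_lt_subset Subgroup.subset_normalClosure⟩

end Jordan

section UnitarianTrick

variable {G : Type*} [Group G] [Finite G]
  {A : Type*} [CStarAlgebra A] [PartialOrder A] [StarOrderedRing A]

theorem exists_units_conj_mem_unitary (ρ : G →* Aˣ) :
    ∃ b : Aˣ, ∀ g, ((b * ρ g * b⁻¹ : Aˣ) : A) ∈ unitary A := by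
  have := Fintype.ofFinite G
  set S : A := ∑ g, star (ρ g : A) * ρ g
  have hS : IsStrictlyPositive S := by
    refine isStrictlyPositive_one.of_le ?_
    simpa using Finset.single_le_sum (f := fun g => star (ρ g : A) * ρ g)
      (fun g _ => star_mul_self_nonneg _) (Finset.mem_univ 1)
  have hinv (h : G) : star (ρ h : A) * S * ρ h = S := by
    simp only [S, Finset.mul_sum, Finset.sum_mul]
    refine Fintype.sum_equiv (Equiv.mulRight h) _ _ fun g => ?_
    simp only [Equiv.coe_mulRight, map_mul, Units.val_mul, star_mul, mul_assoc]
  obtain ⟨b, hb, hSb⟩ := CStarAlgebra.isStrictlyPositive_iff_eq_star_mul_self.mp hS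
  lift b to Aˣ using hb
  refine ⟨b, fun g => ?_⟩
  rw [Units.val_mul, Units.mul_inv_mem_unitary, Units.ext_iff]
  simp only [Units.val_mul, Units.coe_star, star_mul]
  rw [mul_assoc, ← mul_assoc (star (b : A)), ← mul_assoc, ← hSb, hinv, hSb]

theorem exists_normal_isMulCommutative_index_le_of_injective_units [Nontrivial A]
    [FiniteDimensional ℝ A] (ρ : G →* Aˣ) (hρ : Function.Injective ρ) :
    ∃ N : Subgroup G, N.Normal ∧ IsMulCommutative N ∧
      N.index ≤ 5 ^ finrank ℝ A - 3 ^ finrank ℝ A := by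
  obtain ⟨b, hb⟩ := exists_units_conj_mem_unitary ρ
  let σ : G →* unitary A :=
    ((Units.coeHom A).comp ((MulAut.conj b).toMonoidHom.comp ρ)).codRestrict _ hb
  refine exists_normal_isMulCommutative_index_le_of_injective_unitary (ρ := σ) fun g h hgh => hρ ?_
  simpa [σ, Units.ext_iff] using congrArg Subtype.val hgh

end UnitarianTrick

theorem finrank_real_euclideanSpace_continuousLinearMap (n : ℕ) :
    finrank ℝ (EuclideanSpace ℂ (Fin n) →L[ℂ] EuclideanSpace ℂ (Fin n)) = 2 * n ^ 2 := by
  rw [finrank_real_of_complex, ← (Matrix.toEuclideanLin.trans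
    LinearMap.toContinuousLinearMap).finrank_eq, Module.finrank_matrix]
  simp [sq]

/-- Jordan's theorem with the sharpened bound `25 ^ n ^ 2 - 9 ^ n ^ 2`:
every finite subgroup `G` of `GL n ℂ` has an abelian normal subgroup `A`
with index `[G : A] ≤ 25 ^ n ^ 2 - 9 ^ n ^ 2`. -/
theorem jordan_25_minus_9 (n : ℕ) (hn : 1 ≤ n)
    (G : Subgroup (Matrix.GeneralLinearGroup (Fin n) ℂ)) [Finite G] :
    ∃ A : Subgroup G, A.Normal ∧ IsMulCommutative A ∧
      A.index ≤ 25 ^ n ^ 2 - 9 ^ n ^ 2 := by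
  have : Nonempty (Fin n) := ⟨⟨0, hn⟩⟩
  let ρ : G →* (EuclideanSpace ℂ (Fin n) →L[ℂ] EuclideanSpace ℂ (Fin n))ˣ :=
    (Units.map (Matrix.toEuclideanCLM (n := Fin n) (𝕜 := ℂ) : Matrix (Fin n) (Fin n) ℂ →* _)).comp
      G.subtype
  have hρ : Function.Injective ρ :=
    (Units.map_injective Matrix.toEuclideanCLM.injective).comp Subtype.val_injective
  simpa [finrank_real_euclideanSpace_continuousLinearMap, pow_mul] using
    exists_normal_isMulCommutative_index_le_of_injective_units ρ hρ
end

section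
/- Let $V$ be a finite-dimensional complex normed vector space, let $\|\cdot\|_{\mathrm{op}}$ denote the operator norm on $\mathrm{End}(V)$, and let $\mathrm{id}_V$ be the identity map. Suppose $x, y$ are linear isometries of $V$ which generate a finite subgroup of $\mathrm{GL}(V)$. If $\|\mathrm{id}_V - x\|_{\mathrm{op}} < 1/2$ and $\|\mathrm{id}_V - y\|_{\mathrm{op}} < 1/2$, then $x y = y x$. -/
/-!
Among the non-commuting pairs `(u, v)` in the finite group `⟨x, y⟩` with `‖1 - u‖, ‖1 - v‖ < 1/2`,
choose one minimising `‖1 - u‖ + ‖1 - v‖`. All elements of the group are isometries, so the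
commutator `c = ⁅u, v⁆` satisfies `‖1 - c‖ ≤ 2 ‖1 - u‖ ‖1 - v‖ < min ‖1 - u‖ ‖1 - v‖`, and by
minimality `c` commutes with `u` and `v`. Being of finite order and `≠ 1`, `c` has an eigenvalue
`μ ≠ 1`; on its eigenspace `u v = μ v u`, so `tr (u v) = μ tr (v u) = μ tr (u v)` vanishes there.
But `‖1 - u v‖ < 1`, so every eigenvalue of `u v` has positive real part, and so has its trace.
-/

open Module Module.End
open scoped commutatorElement

section NormedRing

variable {R : Type*} [NormedRing R]

lemma norm_one_sub_mul_le {a b : R} (ha : ‖a‖ ≤ 1) : ‖1 - a * b‖ ≤ ‖1 - a‖ + ‖1 - b‖ :=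
  calc ‖1 - a * b‖ = ‖(1 - a) + a * (1 - b)‖ := by noncomm_ring
    _ ≤ ‖1 - a‖ + ‖a‖ * ‖1 - b‖ := norm_add_le_of_le le_rfl (norm_mul_le _ _)
    _ ≤ ‖1 - a‖ + ‖1 - b‖ := by gcongr; exact mul_le_of_le_one_left (norm_nonneg _) ha

lemma norm_one_sub_commutatorElement_le {u v : Rˣ} (hu : ‖(↑u⁻¹ : R)‖ ≤ 1)
    (hv : ‖(↑v⁻¹ : R)‖ ≤ 1) :
    ‖1 - ((⁅u, v⁆ : Rˣ) : R)‖ ≤ 2 * ‖1 - (u : R)‖ * ‖1 - (v : R)‖ := by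
  have h : 1 - ((⁅u, v⁆ : Rˣ) : R) =
      ((1 - v) * (1 - u) - (1 - u) * (1 - v)) * (↑u⁻¹ * ↑v⁻¹ : R) := by
    simp only [commutatorElement_def, Units.val_mul]
    noncomm_ring
    simp [add_comm]
  calc ‖1 - ((⁅u, v⁆ : Rˣ) : R)‖
      ≤ (‖1 - (v : R)‖ * ‖1 - (u : R)‖ + ‖1 - (u : R)‖ * ‖1 - (v : R)‖) * (1 * 1) := by
        rw [h]
        refine (norm_mul_le _ _).trans (mul_le_mul ?_ ?_ (norm_nonneg _) (by positivity))
        · exact (norm_sub_le _ _).trans (add_le_add (norm_mul_le _ _) (norm_mul_le _ _))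
        · exact (norm_mul_le _ _).trans (mul_le_mul hu hv (norm_nonneg _) zero_le_one)
    _ = 2 * ‖1 - (u : R)‖ * ‖1 - (v : R)‖ := by ring

lemma norm_one_sub_commutatorElement_lt {u v : Rˣ} (hu : ‖(↑u⁻¹ : R)‖ ≤ 1)
    (hv : ‖(↑v⁻¹ : R)‖ ≤ 1) (hu2 : ‖1 - (u : R)‖ < 1 / 2) (hv2 : ‖1 - (v : R)‖ < 1 / 2)
    (huv : ¬Commute u v) :
    ‖1 - ((⁅u, v⁆ : Rˣ) : R)‖ < ‖1 - (u : R)‖ ∧ ‖1 - ((⁅u, v⁆ : Rˣ) : R)‖ < ‖1 - (v : R)‖ := by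
  have hpos {w : Rˣ} (hw : w ≠ 1) : 0 < ‖1 - (w : R)‖ :=
    norm_pos_iff.mpr <| sub_ne_zero.mpr fun h => hw (Units.val_eq_one.mp h.symm)
  have hu1 : 0 < ‖1 - (u : R)‖ := hpos <| by rintro rfl; exact huv (Commute.one_left v)
  have hv1 : 0 < ‖1 - (v : R)‖ := hpos <| by rintro rfl; exact huv (Commute.one_right u)
  have := norm_one_sub_commutatorElement_le hu hv
  constructor <;> nlinarith

end NormedRing

section Isometry

variable (𝕜 E : Type*) [NontriviallyNormedField 𝕜] [SeminormedAddCommGroup E] [NormedSpace 𝕜 E]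

def isometrySubgroup : Subgroup (E →L[𝕜] E)ˣ where
  carrier := {g | ∀ v, ‖(g : E →L[𝕜] E) v‖ = ‖v‖}
  one_mem' _ := rfl
  mul_mem' hg hh v := by simp [hg _, hh _]
  inv_mem' {g} hg v := by rw [← hg, ← mul_apply_eq_comp, Units.mul_inv, one_apply_eq_self]

variable {𝕜 E}

lemma norm_le_one_of_mem_isometrySubgroup {g : (E →L[𝕜] E)ˣ} (hg : g ∈ isometrySubgroup 𝕜 E) :
    ‖(g : E →L[𝕜] E)‖ ≤ 1 :=
  ContinuousLinearMap.opNorm_le_bound _ zero_le_one fun v => by rw [hg v, one_mul]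

end Isometry

lemma Subgroup.exists_not_commute_and_commute_commutatorElement {M : Type*} [Group M]
    (H : Subgroup M) [Finite H] (d : M → ℝ) (r : ℝ)
    (hd : ∀ u ∈ H, ∀ v ∈ H, d u < r → d v < r → ¬Commute u v → d ⁅u, v⁆ < d u ∧ d ⁅u, v⁆ < d v)
    {x y : M} (hx : x ∈ H) (hy : y ∈ H) (hxr : d x < r) (hyr : d y < r) (hxy : ¬Commute x y) :
    ∃ u ∈ H, ∃ v ∈ H, d u < r ∧ d v < r ∧ ¬Commute u v ∧
      Commute u ⁅u, v⁆ ∧ Commute v ⁅u, v⁆ := by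
  let T := {p : M × M | p.1 ∈ H ∧ p.2 ∈ H ∧ d p.1 < r ∧ d p.2 < r ∧ ¬Commute p.1 p.2}
  have hT : T.Finite :=
    ((H : Set M).toFinite.prod (H : Set M).toFinite).subset fun p hp => ⟨hp.1, hp.2.1⟩
  obtain ⟨⟨u, v⟩, ⟨hu, hv, hur, hvr, huv⟩, hmin⟩ :=
    T.exists_min_image (fun p => d p.1 + d p.2) hT ⟨(x, y), hx, hy, hxr, hyr, hxy⟩
  obtain ⟨hcu, hcv⟩ := hd u hu v hv hur hvr huv
  have hc : ⁅u, v⁆ ∈ H := H.commutator_le_self (commutator_mem_commutator hu hv)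
  refine ⟨u, hu, v, hv, hur, hvr, huv, by_contra fun h => ?_, by_contra fun h => ?_⟩
  · have := hmin (u, ⁅u, v⁆) ⟨hu, hc, hur, hcv.trans hvr, h⟩
    dsimp only at this
    linarith
  · have := hmin (v, ⁅u, v⁆) ⟨hv, hc, hvr, hcv.trans hvr, h⟩
    dsimp only at this
    linarith

namespace Module.End

lemma HasEigenvalue.of_restrict {R M : Type*} [CommRing R] [AddCommGroup M] [Module R M]
    {f : End R M} {p : Submodule R M} {hfp : ∀ x ∈ p, f x ∈ p} {μ : R}
    (h : HasEigenvalue (f.restrict hfp) μ) : f.HasEigenvalue μ := by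
  obtain ⟨x, hx⟩ := h.exists_hasEigenvector
  exact hasEigenvalue_of_hasEigenvector ⟨mem_eigenspace_iff.mpr (congrArg Subtype.val
    hx.apply_eq_smul), fun h0 => hx.2 (Subtype.ext h0)⟩

section Field

variable {K V : Type*} [Field K] [AddCommGroup V] [Module K V]

lemma trace_mul_eq_zero_of_mul_eq_smul_mul {A B : End K V} {μ : K} (hμ : μ ≠ 1)
    (h : A * B = μ • (B * A)) : LinearMap.trace K V (A * B) = 0 := by
  have h' : μ * LinearMap.trace K V (A * B) = 1 * LinearMap.trace K V (A * B) :=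
    calc μ * LinearMap.trace K V (A * B) = LinearMap.trace K V (μ • (B * A)) := by
          rw [map_smul, smul_eq_mul, LinearMap.trace_mul_comm]
      _ = 1 * LinearMap.trace K V (A * B) := by rw [← h, one_mul]
  by_contra ht
  exact hμ (mul_right_cancel₀ ht h')

lemma exists_hasEigenvalue_ne_one_of_isOfFinOrder [FiniteDimensional K V] [IsAlgClosed K]
    [CharZero K] {f : End K V} (hf : IsOfFinOrder f) (hf1 : f ≠ 1) :
    ∃ μ, f.HasEigenvalue μ ∧ μ ≠ 1 := by
  obtain ⟨n, hn, hfn⟩ := hf.exists_pow_eq_one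
  have hW : LinearMap.range (f - 1) ≠ ⊥ := by rwa [Ne, LinearMap.range_eq_bot, sub_eq_zero]
  have : Nontrivial (LinearMap.range (f - 1)) := Submodule.nontrivial_iff_ne_bot.mpr hW
  have hfW : ∀ w ∈ LinearMap.range (f - 1), f w ∈ LinearMap.range (f - 1) := by
    rintro _ ⟨z, rfl⟩
    exact ⟨f z, by simp only [LinearMap.sub_apply, one_apply, map_sub]⟩
  obtain ⟨μ, hμ⟩ := exists_eigenvalue (f.restrict hfW)
  refine ⟨μ, hμ.of_restrict, ?_⟩
  rintro rfl
  obtain ⟨⟨w, z, hz⟩, hw⟩ := hμ.exists_hasEigenvector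
  have hfw : f w = w := by simpa using congrArg Subtype.val hw.apply_eq_smul
  have hw0 : w ≠ 0 := fun h => hw.2 (Subtype.ext h)
  -- `w = f z - z` is fixed by `f`, so `0 = (f ^ n - 1) z = ∑_{i < n} f ^ i w = n • w`.
  have hfix (i : ℕ) : (f ^ i) w = w := by rw [pow_apply]; exact Function.iterate_fixed hfw i
  have : n • w = 0 := by
    simpa [hfn, Finset.sum_apply, hz, hfix] using congrArg (· z) (geom_sum_mul f n)
  rw [← Nat.cast_smul_eq_nsmul K, smul_eq_zero, Nat.cast_eq_zero] at this
  exact hw0 (this.resolve_left hn.ne')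

end Field

section Complex

variable {V : Type*} [AddCommGroup V] [Module ℂ V] [FiniteDimensional ℂ V]

lemma re_trace_pos_of_forall_hasEigenvalue [Nontrivial V] {f : End ℂ V}
    (hf : ∀ μ, f.HasEigenvalue μ → 0 < μ.re) : 0 < (LinearMap.trace ℂ V f).re := by
  have hroots (μ : ℂ) : μ ∈ f.charpoly.roots ↔ f.HasEigenvalue μ := by
    rw [Polynomial.mem_roots f.charpoly_monic.ne_zero, hasEigenvalue_iff_isRoot_charpoly]
  obtain ⟨μ, hμ⟩ := exists_eigenvalue f
  rw [trace_eq_sum_roots_charpoly_of_splits (IsAlgClosed.splits _), ← Complex.coe_reAddGroupHom,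
    map_multiset_sum, Complex.coe_reAddGroupHom]
  simpa using Multiset.sum_lt_sum_of_nonempty (f := fun _ => (0 : ℝ)) (g := Complex.re)
    (fun h0 => by simpa [h0] using (hroots μ).mpr hμ) fun ν hν => hf ν ((hroots ν).mp hν)

lemma eq_one_of_hasEigenvalue_of_mul_eq_mul_mul {f g c : End ℂ V} (hfc : Commute f c)
    (hgc : Commute g c) (h : f * g = c * (g * f))
    (hfg : ∀ ν, (f * g).HasEigenvalue ν → 0 < ν.re) {μ : ℂ} (hμ : c.HasEigenvalue μ) :
    μ = 1 := by
  by_contra hμ1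
  have : Nontrivial (c.eigenspace μ) := Submodule.nontrivial_iff_ne_bot.mpr hμ
  have hW {a : End ℂ V} (ha : Commute a c) : ∀ w ∈ c.eigenspace μ, a w ∈ c.eigenspace μ :=
    fun _ hw => mapsTo_genEigenspace_of_comm ha.symm μ 1 hw
  let A := f.restrict (hW hfc)
  let B := g.restrict (hW hgc)
  have hAB : A * B = μ • (B * A) := by
    ext ⟨w, hw⟩
    change (f * g) w = μ • (g * f) w
    rw [h, mul_apply, ← mul_apply _ _ w, ← (hgc.mul_left hfc).eq, mul_apply,
      mem_eigenspace_iff.mp hw, map_smul]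
  have hre (ν : ℂ) (hν : HasEigenvalue (A * B) ν) : 0 < ν.re :=
    hfg ν (HasEigenvalue.of_restrict (hfp := hW (hfc.mul_left hgc)) hν)
  have := re_trace_pos_of_forall_hasEigenvalue hre
  rw [trace_mul_eq_zero_of_mul_eq_smul_mul hμ1 hAB] at this
  exact this.false

end Complex

end Module.End

section Operator

variable {E : Type*} [NormedAddCommGroup E] [NormedSpace ℂ E]

lemma re_pos_of_hasEigenvalue {a : E →L[ℂ] E} (ha : ‖1 - a‖ < 1) {ν : ℂ}
    (hν : HasEigenvalue (a : End ℂ E) ν) : 0 < ν.re := by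
  obtain ⟨w, hw⟩ := hν.exists_hasEigenvector
  have hν_le : ‖1 - ν‖ ≤ ‖1 - a‖ := by
    refine le_of_mul_le_mul_right ?_ (norm_pos_iff.mpr hw.2)
    calc ‖1 - ν‖ * ‖w‖ = ‖(1 - a) w‖ := by
          rw [← norm_smul, sub_smul, one_smul, sub_apply, one_apply_eq_self, ← hw.apply_eq_smul]
          rfl
      _ ≤ ‖1 - a‖ * ‖w‖ := (1 - a).le_opNorm w
  have := Complex.re_le_norm (1 - ν)
  rw [Complex.sub_re, Complex.one_re] at this
  linarith

lemma commutatorElement_eq_one_of_commute_s4 [FiniteDimensional ℂ E] {u v : (E →L[ℂ] E)ˣ}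
    (hu : ‖(u : E →L[ℂ] E)‖ ≤ 1) (huv : ‖1 - (u : E →L[ℂ] E)‖ + ‖1 - (v : E →L[ℂ] E)‖ < 1)
    (hcu : Commute u ⁅u, v⁆) (hcv : Commute v ⁅u, v⁆) (hc : IsOfFinOrder ⁅u, v⁆) :
    ⁅u, v⁆ = 1 := by
  let φ : (E →L[ℂ] E)ˣ →* End ℂ E :=
    ContinuousLinearMap.toLinearMapRingHom.toMonoidHom.comp (Units.coeHom _)
  have hφ : Function.Injective φ := ContinuousLinearMap.coe_injective.comp Units.val_injective
  have hrel : φ u * φ v = φ ⁅u, v⁆ * (φ v * φ u) := by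
    rw [← map_mul, ← map_mul, ← map_mul, commutatorElement_def]
    group
  have hre (ν : ℂ) (hν : HasEigenvalue (φ u * φ v) ν) : 0 < ν.re := by
    rw [← map_mul] at hν
    exact re_pos_of_hasEigenvalue ((norm_one_sub_mul_le hu).trans_lt huv) hν
  by_contra hc1
  obtain ⟨μ, hμ, hμ1⟩ := exists_hasEigenvalue_ne_one_of_isOfFinOrder (φ.isOfFinOrder hc)
    fun h => hc1 (hφ (h.trans (map_one φ).symm))
  exact hμ1 <| eq_one_of_hasEigenvalue_of_mul_eq_mul_mul (hcu.map φ) (hcv.map φ) hrel hre hμ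

end Operator

/-- If two linear isometries `x, y` of a finite-dimensional complex normed
vector space generate a finite subgroup of `GL(V)` and both satisfy
`‖id - ·‖ < 1/2` in the operator norm, then they commute. -/
theorem commute_of_close_to_id
    (V : Type*) [NormedAddCommGroup V] [NormedSpace ℂ V] [FiniteDimensional ℂ V]
    (x y : (V →L[ℂ] V)ˣ)
    (hxiso : ∀ v : V, ‖(x : V →L[ℂ] V) v‖ = ‖v‖)
    (hyiso : ∀ v : V, ‖(y : V →L[ℂ] V) v‖ = ‖v‖)
    (hfin : Finite (Subgroup.closure {x, y} : Subgroup (V →L[ℂ] V)ˣ))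
    (hx : ‖(1 : V →L[ℂ] V) - x‖ < 1 / 2)
    (hy : ‖(1 : V →L[ℂ] V) - y‖ < 1 / 2) :
    x * y = y * x := by
  have hnorm {g} (hg : g ∈ Subgroup.closure {x, y}) : ‖(g : V →L[ℂ] V)‖ ≤ 1 := by
    refine norm_le_one_of_mem_isometrySubgroup (Subgroup.closure_le _ |>.mpr ?_ hg)
    rintro g (rfl | rfl) <;> assumption
  by_contra hxy
  obtain ⟨u, hu, v, hv, hu2, hv2, huv, hcu, hcv⟩ :=
    (Subgroup.closure {x, y}).exists_not_commute_and_commute_commutatorElement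
      (fun g => ‖1 - (g : V →L[ℂ] V)‖) (1 / 2)
      (fun u hu v hv => norm_one_sub_commutatorElement_lt (hnorm (inv_mem hu)) (hnorm (inv_mem hv)))
      (Subgroup.subset_closure (by simp)) (Subgroup.subset_closure (by simp)) hx hy hxy
  have hcG : ⁅u, v⁆ ∈ Subgroup.closure {x, y} :=
    Subgroup.commutator_le_self _ (Subgroup.commutator_mem_commutator hu hv)
  have hc : IsOfFinOrder ⁅u, v⁆ := (Subgroup.closure {x, y}).subtype.isOfFinOrder
    (isOfFinOrder_of_finite (⟨⁅u, v⁆, hcG⟩ : Subgroup.closure {x, y}))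
  exact huv <| commutatorElement_eq_one_iff_commute.mp <|
    commutatorElement_eq_one_of_commute_s4 (hnorm hu) (by linarith) hcu hcv hc
end

section
/- Let $V$ be a finite-dimensional complex normed vector space, let $\|\cdot\|_{\mathrm{op}}$ denote the operator norm on $\mathrm{End}(V)$, and let $\mathrm{id}_V$ be the identity map. If $x$ and $z$ are linear isometries of $V$, then $\|\mathrm{id}_V - x^{-1} z^{-1} x z\|_{\mathrm{op}} \le 2 \, \|\mathrm{id}_V - x\|_{\mathrm{op}} \cdot \|\mathrm{id}_V - z\|_{\mathrm{op}}$. -/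
/-- The commutator bound: for linear isometries `x, z` of a finite-dimensional
complex normed vector space,
`‖id - x⁻¹z⁻¹xz‖ ≤ 2 * ‖id - x‖ * ‖id - z‖` in the operator norm. -/
theorem norm_id_sub_commutator_le
    (V : Type*) [NormedAddCommGroup V] [NormedSpace ℂ V] [FiniteDimensional ℂ V]
    (x z : (V →L[ℂ] V)ˣ)
    (hxiso : ∀ v : V, ‖(x : V →L[ℂ] V) v‖ = ‖v‖)
    (hziso : ∀ v : V, ‖(z : V →L[ℂ] V) v‖ = ‖v‖) :
    ‖(1 : V →L[ℂ] V) - ↑(x⁻¹ * z⁻¹ * x * z)‖ ≤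
      2 * (‖(1 : V →L[ℂ] V) - x‖ * ‖(1 : V →L[ℂ] V) - z‖) := by
  set X := (x : V →L[ℂ] V) with hX
  set Z := (z : V →L[ℂ] V) with hZ
  set Xi := ((x⁻¹ : (V →L[ℂ] V)ˣ) : V →L[ℂ] V) with hXi
  set Zi := ((z⁻¹ : (V →L[ℂ] V)ˣ) : V →L[ℂ] V) with hZi
  have hxm : Xi * X = 1 := x.inv_mul
  have hzm : Zi * Z = 1 := z.inv_mul
  have hmx : X * Xi = 1 := x.mul_inv
  have hmz : Z * Zi = 1 := z.mul_inv
  have hxinv : ∀ v : V, ‖Xi v‖ = ‖v‖ := by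
    intro v
    have h : X (Xi v) = v := by
      rw [show X (Xi v) = (X * Xi) v from rfl, hmx]; rfl
    rw [← hxiso (Xi v), h]
  have hzinv : ∀ v : V, ‖Zi v‖ = ‖v‖ := by
    intro v
    have h : Z (Zi v) = v := by
      rw [show Z (Zi v) = (Z * Zi) v from rfl, hmz]; rfl
    rw [← hziso (Zi v), h]
  have hXin : ‖Xi‖ ≤ 1 :=
    ContinuousLinearMap.opNorm_le_bound _ zero_le_one (fun v => by rw [hxinv, one_mul])
  have hZin : ‖Zi‖ ≤ 1 :=
    ContinuousLinearMap.opNorm_le_bound _ zero_le_one (fun v => by rw [hzinv, one_mul])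
  have hcast : (↑(x⁻¹ * z⁻¹ * x * z) : V →L[ℂ] V) = Xi * Zi * X * Z := by
    push_cast; rfl
  have key : (1 : V →L[ℂ] V) - Xi * Zi * X * Z
      = Xi * (Zi * ((1 - Z) * (1 - X) - (1 - X) * (1 - Z))) := by
    have h1 : (1 - Z) * (1 - X) - (1 - X) * (1 - Z) = Z * X - X * Z := by
      noncomm_ring
    rw [h1, mul_sub, mul_sub, ← mul_assoc Zi Z X, hzm, one_mul, hxm]
    noncomm_ring
  rw [hcast, key]
  calc ‖Xi * (Zi * ((1 - Z) * (1 - X) - (1 - X) * (1 - Z)))‖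
      ≤ ‖Xi‖ * (‖Zi‖ * ‖(1 - Z) * (1 - X) - (1 - X) * (1 - Z)‖) :=
        le_trans (norm_mul_le _ _)
          (mul_le_mul_of_nonneg_left (norm_mul_le _ _) (norm_nonneg _))
    _ ≤ 1 * (1 * ‖(1 - Z) * (1 - X) - (1 - X) * (1 - Z)‖) := by
        gcongr
    _ = ‖(1 - Z) * (1 - X) - (1 - X) * (1 - Z)‖ := by ring
    _ ≤ ‖(1 - Z) * (1 - X)‖ + ‖(1 - X) * (1 - Z)‖ := norm_sub_le _ _
    _ ≤ ‖(1 : V →L[ℂ] V) - Z‖ * ‖(1 : V →L[ℂ] V) - X‖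
        + ‖(1 : V →L[ℂ] V) - X‖ * ‖(1 : V →L[ℂ] V) - Z‖ :=
        add_le_add (norm_mul_le _ _) (norm_mul_le _ _)
    _ = 2 * (‖(1 : V →L[ℂ] V) - X‖ * ‖(1 : V →L[ℂ] V) - Z‖) := by ring
end

section
/- Let $V$ be a finite-dimensional complex normed vector space and let $G$ be a finite group of linear isometries of $V$. Set $M = \{x \in G : \|\mathrm{id}_V - x\|_{\mathrm{op}} < 1/2\}$. Then the subgroup $A$ of $G$ generated by $M$ is an abelian normal subgroup of $G$. -/
/-!
Isometries have operator norm at most `1`, so `‖1 - x‖` is invariant under conjugation in `G`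
and `‖1 - ⁅x, y⁆‖ ≤ 2 ‖1 - x‖ ‖1 - y‖`: the set `M` is normal, and for `x ∈ M` the commutator
`⁅x, y⁆` lies strictly closer to `1` than `y`. If `M` were not commutative, pick `x, y ∈ M` not
commuting with `‖1 - y‖` minimal; then `c = ⁅x, y⁆ ∈ M` commutes with `M`, hence with `x` and `y`,
and `c ^ k * y = x ^ k * y * x⁻ᵏ ∈ M` for all `k`. A common eigenvector of `c` and `y`, with
eigenvalues `μ ≠ 1` (a root of unity, as `c` has finite order) and `β`, gives
`‖μ ^ k β - 1‖ < 1/2` and `‖β - 1‖ < 1/2`, so `‖μ ^ k - 1‖ < 1` and `Re μ ^ k > 0` for every `k`,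
contradicting `∑_{k < m} μ ^ k = 0`.
-/

open Polynomial
open scoped commutatorElement

theorem Complex.eq_one_of_pow_eq_one_of_forall_norm_pow_sub_one_lt_one {μ : ℂ} {m : ℕ}
    (hm : m ≠ 0) (hμm : μ ^ m = 1) (h : ∀ k : ℕ, ‖μ ^ k - 1‖ < 1) : μ = 1 := by
  by_contra hμ
  have hsum : ∑ k ∈ Finset.range m, μ ^ k = 0 := by
    simpa [hμm] using (geom_sum_eq hμ m)
  have hre : ∀ k, 0 < (μ ^ k).re := fun k => by
    have := (Complex.abs_re_le_norm (μ ^ k - 1)).trans_lt (h k)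
    rw [Complex.sub_re, Complex.one_re, abs_lt] at this
    linarith
  have := Finset.sum_pos (fun k _ => hre k) (Finset.nonempty_range_iff.mpr hm)
  simp [← Complex.re_sum, hsum] at this

namespace Module.End

section AlgClosed

variable {K V : Type*} [Field K] [IsAlgClosed K] [AddCommGroup V] [Module K V]
  [FiniteDimensional K V]

theorem exists_hasEigenvalue_ne_one_of_pow_eq_one [CharZero K] {f : End K V} {m : ℕ}
    (hm : m ≠ 0) (hfm : f ^ m = 1) (hf : f ≠ 1) : ∃ μ, μ ≠ 1 ∧ f.HasEigenvalue μ := by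
  have hsep : (X ^ m - 1 : K[X]).Separable :=
    X_pow_sub_one_separable_iff.mpr (by exact_mod_cast hm)
  have hs : (f - algebraMap K (End K V) 1).IsSemisimple :=
    isSemisimple_sub_algebraMap_iff.mpr <|
      isSemisimple_of_squarefree_aeval_eq_zero hsep.squarefree (by simp [hfm])
  obtain ⟨ν, hν, hν0⟩ : ∃ ν, (f - algebraMap K (End K V) 1).HasEigenvalue ν ∧ ν ≠ 0 := by
    by_contra! h
    exact hf (sub_eq_zero.mp (by simpa using hs.eq_zero_iff_forall_eigenvalue.mpr h))
  obtain ⟨v, hv⟩ := hν.exists_hasEigenvector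
  refine ⟨ν + 1, by simpa using hν0, hasEigenvalue_of_hasEigenvector (x := v) ⟨?_, hv.2⟩⟩
  have := hv.apply_eq_smul
  simp only [map_one, LinearMap.sub_apply, one_apply, sub_eq_iff_eq_add] at this
  simp [this, add_smul]

theorem exists_hasEigenvector_of_commute {f g : End K V} (hfg : Commute f g) {μ : K}
    (hμ : f.HasEigenvalue μ) : ∃ v β, f.HasEigenvector μ v ∧ g.HasEigenvector β v := by
  have hg : Set.MapsTo g (f.eigenspace μ) (f.eigenspace μ) := by
    simpa using mapsTo_genEigenspace_of_comm hfg μ 1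
  have : Nontrivial (f.eigenspace μ) := Submodule.nontrivial_iff_ne_bot.mpr hμ
  obtain ⟨β, hβ⟩ := exists_eigenvalue (g.restrict hg)
  obtain ⟨⟨v, hvμ⟩, hv⟩ := hβ.exists_hasEigenvector
  have hv0 : v ≠ 0 := fun h => hv.2 (by simp [h])
  refine ⟨v, β, ⟨hvμ, hv0⟩, ?_, hv0⟩
  exact eigenspace_restrict_le_eigenspace g hg β ⟨_, hv.1, rfl⟩

end AlgClosed

variable {V : Type*} [AddCommGroup V] [Module ℂ V] [FiniteDimensional ℂ V]

theorem eq_one_of_commute_of_hasEigenvalue_pow_mul {u w : End ℂ V} (huw : Commute u w)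
    (hu : IsOfFinOrder u)
    (h : ∀ (k : ℕ) (ν : ℂ), (u ^ k * w).HasEigenvalue ν → ‖ν - 1‖ < 1 / 2) : u = 1 := by
  by_contra hu1
  obtain ⟨m, hm, hum⟩ := hu.exists_pow_eq_one
  obtain ⟨μ, hμ1, hμ⟩ := exists_hasEigenvalue_ne_one_of_pow_eq_one hm.ne' hum hu1
  obtain ⟨v, β, hv, hw⟩ := exists_hasEigenvector_of_commute huw hμ
  have hμm : μ ^ m = 1 := by
    have := hv.pow_apply m
    rw [hum, one_apply] at this
    exact smul_left_injective ℂ hv.2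
      (show μ ^ m • v = (1 : ℂ) • v by rw [one_smul]; exact this.symm)
  have hμk : ∀ k : ℕ, ‖μ ^ k * β - 1‖ < 1 / 2 := fun k =>
    h k _ <| hasEigenvalue_of_hasEigenvector (x := v) ⟨by
      rw [mem_eigenspace_iff, mul_apply, hw.apply_eq_smul, map_smul,
        hv.pow_apply, smul_smul, mul_comm], hv.2⟩
  have hβ : ‖β - 1‖ < 1 / 2 := by simpa using hμk 0
  refine hμ1 (Complex.eq_one_of_pow_eq_one_of_forall_norm_pow_sub_one_lt_one hm.ne' hμm
    fun k => ?_)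
  have hμk_norm : ‖μ ^ k‖ = 1 := by
    rw [norm_pow, Complex.norm_eq_one_of_pow_eq_one hμm hm.ne', one_pow]
  calc ‖μ ^ k - 1‖ ≤ ‖μ ^ k - μ ^ k * β‖ + ‖μ ^ k * β - 1‖ :=
        norm_sub_le_norm_sub_add_norm_sub _ _ _
    _ = ‖β - 1‖ + ‖μ ^ k * β - 1‖ := by
      rw [← mul_one_sub, norm_mul, hμk_norm, one_mul, norm_sub_rev]
    _ < 1 := by linarith [hμk k]

end Module.End

theorem commutatorElement_pow_mul_eq_conj_pow {G : Type*} [Group G] {x y : G}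
    (h : Commute x ⁅x, y⁆) (k : ℕ) : ⁅x, y⁆ ^ k * y = x ^ k * y * (x ^ k)⁻¹ := by
  induction k with
  | zero => simp
  | succ k ih =>
    calc ⁅x, y⁆ ^ (k + 1) * y = ⁅x, y⁆ ^ k * x * y * x⁻¹ := by
          rw [pow_succ, commutatorElement_def]; group
      _ = x * (⁅x, y⁆ ^ k * y) * x⁻¹ := by rw [← (h.pow_right k).eq]; group
      _ = x ^ (k + 1) * y * (x ^ (k + 1))⁻¹ := by rw [ih]; group

namespace Units

variable {R : Type*} [NormedRing R]

theorem norm_one_sub_conj_le {g : Rˣ} (hg : ‖(g : R)‖ ≤ 1) (hg' : ‖(↑g⁻¹ : R)‖ ≤ 1) (a : R) :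
    ‖1 - g * a * ↑g⁻¹‖ ≤ ‖1 - a‖ :=
  calc ‖1 - g * a * ↑g⁻¹‖ = ‖g * (1 - a) * ↑g⁻¹‖ := by rw [mul_sub, sub_mul, mul_one, g.mul_inv]
    _ ≤ ‖(g : R)‖ * ‖1 - a‖ * ‖(↑g⁻¹ : R)‖ := norm_mul₃_le
    _ ≤ 1 * ‖1 - a‖ * 1 := by gcongr
    _ = ‖1 - a‖ := by ring

theorem norm_one_sub_commutatorElement_le {a b : Rˣ} (ha : ‖(↑a⁻¹ : R)‖ ≤ 1)
    (hb : ‖(↑b⁻¹ : R)‖ ≤ 1) : ‖1 - (↑⁅a, b⁆ : R)‖ ≤ 2 * ‖1 - (a : R)‖ * ‖1 - (b : R)‖ :=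
  calc ‖1 - (↑⁅a, b⁆ : R)‖
      = ‖((1 - b) * (1 - a) - (1 - a) * (1 - (b : R))) * ↑a⁻¹ * ↑b⁻¹‖ := by
        have h : ((1 - b) * (1 - a) - (1 - a) * (1 - (b : R))) * ↑a⁻¹ * ↑b⁻¹
            = b * (a * ↑a⁻¹) * ↑b⁻¹ - a * b * ↑a⁻¹ * ↑b⁻¹ := by noncomm_ring
        rw [h, a.mul_inv, mul_one, b.mul_inv, commutatorElement_def]
        push_cast
        rfl
    _ ≤ ‖(1 - b) * (1 - a) - (1 - a) * (1 - (b : R))‖ * ‖(↑a⁻¹ : R)‖ * ‖(↑b⁻¹ : R)‖ :=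
        norm_mul₃_le
    _ ≤ (‖1 - (b : R)‖ * ‖1 - (a : R)‖ + ‖1 - (a : R)‖ * ‖1 - (b : R)‖) * 1 * 1 := by
        gcongr
        exact (norm_sub_le _ _).trans (add_le_add (norm_mul_le _ _) (norm_mul_le _ _))
    _ = 2 * ‖1 - (a : R)‖ * ‖1 - (b : R)‖ := by ring

end Units

namespace ContinuousLinearMap

variable {𝕜 E : Type*} [NontriviallyNormedField 𝕜] [NormedAddCommGroup E] [NormedSpace 𝕜 E]

theorem norm_sub_one_le_of_hasEigenvalue {a : E →L[𝕜] E} {ν : 𝕜}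
    (h : Module.End.HasEigenvalue (a : E →ₗ[𝕜] E) ν) : ‖ν - 1‖ ≤ ‖1 - a‖ := by
  obtain ⟨v, hv⟩ := h.exists_hasEigenvector
  have hav : a v = ν • v := hv.apply_eq_smul
  have hv' : (1 - a) v = (1 - ν) • v := by simp [sub_smul, hav]
  have := (1 - a).le_opNorm v
  rw [hv', norm_smul, norm_sub_rev] at this
  exact le_of_mul_le_mul_right this (norm_pos_iff.mpr hv.2)

theorem eq_one_of_commute_of_norm_one_sub_pow_mul_lt {V : Type*} [NormedAddCommGroup V]
    [NormedSpace ℂ V] [FiniteDimensional ℂ V] {u w : V →L[ℂ] V} (huw : Commute u w)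
    (hu : IsOfFinOrder u) (h : ∀ k : ℕ, ‖1 - u ^ k * w‖ < 1 / 2) : u = 1 := by
  let φ := toLinearMapRingHom (R₁ := ℂ) (M₁ := V)
  refine coe_injective (Module.End.eq_one_of_commute_of_hasEigenvalue_pow_mul (huw.map φ)
    (φ.toMonoidHom.isOfFinOrder hu) fun k ν hν =>
      (norm_sub_one_le_of_hasEigenvalue ?_).trans_lt (h k))
  simpa [φ] using hν

end ContinuousLinearMap

namespace Subgroup

section NormedRing

variable {R : Type*} [NormedRing R] {G : Subgroup Rˣ}

def nearOne (G : Subgroup Rˣ) : Set G := {x | ‖(1 : R) - ((x : Rˣ) : R)‖ < 1 / 2}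

theorem conj_mem_nearOne (hG : ∀ g ∈ G, ‖(g : R)‖ ≤ 1) (g : G) {x : G} (hx : x ∈ G.nearOne) :
    g * x * g⁻¹ ∈ G.nearOne := by
  have := Units.norm_one_sub_conj_le (hG g g.2) (hG _ (inv_mem g.2)) ((x : Rˣ) : R)
  simp only [nearOne, Set.mem_ofPred_eq] at hx ⊢
  push_cast
  exact this.trans_lt hx

theorem closure_nearOne_normal (hG : ∀ g ∈ G, ‖(g : R)‖ ≤ 1) : (closure G.nearOne).Normal :=
  normalizer_eq_top_iff.mp <| eq_top_iff.mpr <| le_normalizer_closure_iff.mpr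
    fun g _ _ hx => subset_closure (conj_mem_nearOne hG g hx)

theorem norm_one_sub_commutatorElement_lt (hG : ∀ g ∈ G, ‖(g : R)‖ ≤ 1) {x y : G}
    (hx : x ∈ G.nearOne) (hy : y ≠ 1) :
    ‖(1 : R) - ((⁅x, y⁆ : G) : Rˣ)‖ < ‖(1 : R) - ((y : Rˣ) : R)‖ := by
  have hy' : 0 < ‖(1 : R) - ((y : Rˣ) : R)‖ := by
    refine norm_pos_iff.mpr (sub_ne_zero.mpr fun h => hy ?_)
    exact Subtype.ext (Units.ext h.symm)
  have := Units.norm_one_sub_commutatorElement_le (hG _ (inv_mem x.2)) (hG _ (inv_mem y.2))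
  have hx' : ‖(1 : R) - ((x : Rˣ) : R)‖ < 1 / 2 := hx
  calc ‖(1 : R) - ((⁅x, y⁆ : G) : Rˣ)‖
      ≤ 2 * ‖(1 : R) - ((x : Rˣ) : R)‖ * ‖(1 : R) - ((y : Rˣ) : R)‖ := by
        simpa [commutatorElement_def] using this
    _ < ‖(1 : R) - ((y : Rˣ) : R)‖ := by nlinarith

end NormedRing

section Operators

variable {V : Type*} [NormedAddCommGroup V] [NormedSpace ℂ V] [FiniteDimensional ℂ V]
  {G : Subgroup (V →L[ℂ] V)ˣ} [Finite G]

theorem eq_one_of_forall_pow_mul_mem_nearOne {c y : G} (hcy : Commute c y)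
    (h : ∀ k : ℕ, c ^ k * y ∈ G.nearOne) : c = 1 := by
  let ι : G →* V →L[ℂ] V := (Units.coeHom _).comp G.subtype
  have := ContinuousLinearMap.eq_one_of_commute_of_norm_one_sub_pow_mul_lt (hcy.map ι)
    (ι.isOfFinOrder (isOfFinOrder_of_finite c)) fun k => by simpa [ι, nearOne] using h k
  exact Subtype.ext (Units.ext this)

theorem commute_of_mem_nearOne (hG : ∀ g ∈ G, ‖(g : V →L[ℂ] V)‖ ≤ 1) :
    ∀ x ∈ G.nearOne, ∀ y ∈ G.nearOne, Commute x y := by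
  let N : G → ℝ := fun z => ‖(1 : V →L[ℂ] V) - ((z : (V →L[ℂ] V)ˣ) : V →L[ℂ] V)‖
  by_contra! h
  obtain ⟨x₀, hx₀, y₀, hy₀, h₀⟩ := h
  let T := {y | y ∈ G.nearOne ∧ ∃ x ∈ G.nearOne, ¬Commute x y}
  obtain ⟨y, ⟨hy, x, hx, hxy⟩, hmin⟩ := T.exists_min_image N T.toFinite ⟨y₀, hy₀, x₀, hx₀, h₀⟩
  have hy1 : y ≠ 1 := by rintro rfl; exact hxy (Commute.one_right x)
  have hc_lt := norm_one_sub_commutatorElement_lt hG hx hy1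
  have hc : ⁅x, y⁆ ∈ G.nearOne := hc_lt.trans hy
  have hc_comm : ∀ z ∈ G.nearOne, Commute z ⁅x, y⁆ := fun z hz => by
    by_contra h
    exact (hmin _ ⟨hc, z, hz, h⟩).not_gt hc_lt
  refine hxy (commutatorElement_eq_one_iff_commute.mp ?_)
  refine eq_one_of_forall_pow_mul_mem_nearOne (hc_comm y hy).symm fun k => ?_
  rw [commutatorElement_pow_mul_eq_conj_pow (hc_comm x hx)]
  exact conj_mem_nearOne hG _ hy

end Operators

end Subgroup

/-- For a finite group `G` of linear isometries of a finite-dimensional complex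
normed vector space, the subgroup generated by
`M = {x ∈ G : ‖id - x‖ < 1/2}` is an abelian normal subgroup of `G`. -/
theorem closure_near_id_abelian_normal
    (V : Type*) [NormedAddCommGroup V] [NormedSpace ℂ V] [FiniteDimensional ℂ V]
    (G : Subgroup (V →L[ℂ] V)ˣ) [Finite G]
    (hiso : ∀ g ∈ G, ∀ v : V, ‖(g : V →L[ℂ] V) v‖ = ‖v‖)
    (A : Subgroup G)
    (hA : A = Subgroup.closure
      {x : G | ‖(1 : V →L[ℂ] V) - ((x : (V →L[ℂ] V)ˣ) : V →L[ℂ] V)‖ < 1 / 2}) :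
    A.Normal ∧ IsMulCommutative A := by
  subst hA
  have hG : ∀ g ∈ G, ‖(g : V →L[ℂ] V)‖ ≤ 1 := fun g hg =>
    ContinuousLinearMap.opNorm_le_bound _ zero_le_one fun v => by rw [hiso g hg v, one_mul]
  exact ⟨Subgroup.closure_nearOne_normal hG, Subgroup.isMulCommutative_closure
    fun x hx y hy => (Subgroup.commute_of_mem_nearOne hG x hx y hy).eq⟩
end

section
/- For every $n \ge 4$ there exists a finite subgroup $G \le \mathrm{GL}_n(\mathbb{C})$ such that every abelian normal subgroup $A$ of $G$ satisfies $[G : A] \ge (n+1)!$. Consequently, any function $f(n)$ for which Jordan's theorem holds must satisfy $f(n) \ge (n+1)!$ for $n \ge 4$. -/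
/-!
A nontrivial normal subgroup of `Sym(m)`, `m ≥ 5`, contains the alternating group, which is not
abelian; so `Sym(m)` has no nontrivial abelian normal subgroup. The action of `Sym(n + 1)` on the
vectors of `ℂⁿ⁺¹` with coordinate sum zero is faithful and `n`-dimensional, so it realises
`Sym(n + 1)` as a finite subgroup of `GL_n(ℂ)` whose abelian normal subgroups are all trivial,
hence of index `(n + 1)!`.
-/

open Equiv Subgroup Module

namespace Equiv.Perm

theorem eq_bot_of_normal_of_isMulCommutative {α : Type*} [Finite α] (hα : 5 ≤ Nat.card α)
    (N : Subgroup (Perm α)) [N.Normal] [IsMulCommutative N] : N = ⊥ := by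
  classical
  have := Fintype.ofFinite α
  by_contra hN
  have hle : alternatingGroup α ≤ N :=
    alternatingGroup_le_of_normal hα ((nontrivial_iff_ne_bot N).mpr hN)
  have : IsMulCommutative (alternatingGroup α) := le_centralizer_iff_isMulCommutative.mp <|
    hle.trans ((le_centralizer N).trans (centralizer_le hle))
  have := alternatingGroup.isMulCommutative_iff_card_le_three.mp this
  omega

end Equiv.Perm

theorem Subgroup.eq_bot_of_normal_of_isMulCommutative_of_mulEquiv {G H : Type*} [Group G]
    [Group H] (e : G ≃* H) (hG : ∀ N : Subgroup G, N.Normal → IsMulCommutative N → N = ⊥)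
    (A : Subgroup H) [A.Normal] [IsMulCommutative A] : A = ⊥ := by
  rw [← map_eq_bot_iff_of_injective A (f := e.symm.toMonoidHom) e.symm.injective]
  exact hG _ (‹A.Normal›.map _ e.symm.surjective) inferInstance

section SumZero

variable (K α : Type*) [Fintype α]

def sumZeroSubmodule [CommSemiring K] : Submodule K (α → K) :=
  LinearMap.ker (∑ i, LinearMap.proj i)

variable {K α} in
theorem mem_sumZeroSubmodule [CommSemiring K] {v : α → K} :
    v ∈ sumZeroSubmodule K α ↔ ∑ i, v i = 0 := by
  simp [sumZeroSubmodule]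

theorem finrank_sumZeroSubmodule [Field K] [Nonempty α] :
    finrank K (sumZeroSubmodule K α) = Fintype.card α - 1 := by
  classical
  let s : (α → K) →ₗ[K] K := ∑ i, LinearMap.proj i
  have hs : Function.Surjective s := fun c ↦
    ⟨Pi.single (Classical.arbitrary α) c, by simp [s]⟩
  have := LinearMap.finrank_range_add_finrank_ker s
  rw [LinearMap.range_eq_top.mpr hs, finrank_top, finrank_self,
    finrank_fintype_fun_eq_card] at this
  change finrank K (LinearMap.ker s) = _
  omega

end SumZero

namespace Equiv.Perm

variable (K α : Type*)

def permRepresentation [CommSemiring K] : Representation K (Perm α) (α → K) where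
  toFun σ := (LinearEquiv.funCongrLeft K K σ⁻¹).toLinearMap
  map_one' := rfl
  map_mul' _ _ := rfl

variable {K α} in
@[simp]
theorem permRepresentation_apply [CommSemiring K] (σ : Perm α) (v : α → K) (i : α) :
    permRepresentation K α σ v i = v (σ⁻¹ i) := rfl

variable [Fintype α]

theorem sumZeroSubmodule_le_comap_permRepresentation [CommSemiring K] (σ : Perm α) :
    sumZeroSubmodule K α ≤ (sumZeroSubmodule K α).comap (permRepresentation K α σ) := by
  intro v hv
  rw [Submodule.mem_comap, mem_sumZeroSubmodule] at *
  simpa using (Equiv.sum_comp σ⁻¹ v).trans hv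

def standardRepresentation [CommSemiring K] :
    Representation K (Perm α) (sumZeroSubmodule K α) :=
  (permRepresentation K α).subrepresentation _
    (sumZeroSubmodule_le_comap_permRepresentation K α)

theorem standardRepresentation_injective [CommRing K] [NeZero (2 : K)] :
    Function.Injective (standardRepresentation K α) := by
  classical
  rw [injective_iff_map_eq_one]
  intro σ hσ
  by_contra hσ1
  obtain ⟨a, ha⟩ : ∃ a, σ a ≠ a := by
    by_contra! h
    exact hσ1 (Equiv.ext h)
  -- `σ` moves the coordinate `-1` of `v` at `σ a` to the coordinate `1` at `a`.
  set v : α → K := Pi.single a 1 - Pi.single (σ a) 1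
  have hv : v ∈ sumZeroSubmodule K α := by
    simp [v, mem_sumZeroSubmodule, Finset.sum_sub_distrib]
  have := congrArg (fun f ↦ (f ⟨v, hv⟩ : α → K) (σ a)) hσ
  simp [standardRepresentation, v, ha, Ne.symm ha] at this
  exact NeZero.ne (2 : K) (by linear_combination this)

theorem exists_monoidHom_injective_GL [Field K] [NeZero (2 : K)] (n : ℕ) :
    ∃ ρ : Perm (Fin (n + 1)) →* Matrix.GeneralLinearGroup (Fin n) K, Function.Injective ρ := by
  let b := finBasisOfFinrankEq K (sumZeroSubmodule K (Fin (n + 1))) (n := n)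
    (by simp [finrank_sumZeroSubmodule])
  have hρ : Function.Injective (standardRepresentation K (Fin (n + 1))).asGroupHom :=
    fun σ τ h ↦ standardRepresentation_injective K _ <| by
      simpa only [Representation.asGroupHom_apply] using congrArg Units.val h
  exact ⟨(Matrix.GeneralLinearGroup.toLin' b).symm.toMonoidHom.comp
    (standardRepresentation K _).asGroupHom,
    (Matrix.GeneralLinearGroup.toLin' b).symm.injective.comp hρ⟩

end Equiv.Perm

/-- For every `n ≥ 4` there is a finite subgroup `G ≤ GL n ℂ` all of whose
abelian normal subgroups have index at least `(n + 1)!`.  Consequently, any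
bound `f` for which Jordan's theorem holds satisfies `f n ≥ (n + 1)!` for
`n ≥ 4`. -/
theorem jordan_lower_bound (n : ℕ) (hn : 4 ≤ n) :
    (∃ G : Subgroup (Matrix.GeneralLinearGroup (Fin n) ℂ), Finite G ∧
      ∀ A : Subgroup G, A.Normal → IsMulCommutative A →
        Nat.factorial (n + 1) ≤ A.index) ∧
    (∀ f : ℕ → ℕ,
      (∀ m, 1 ≤ m → ∀ G : Subgroup (Matrix.GeneralLinearGroup (Fin m) ℂ),
        Finite G →
        ∃ A : Subgroup G, A.Normal ∧ IsMulCommutative A ∧ A.index ≤ f m) →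
      Nat.factorial (n + 1) ≤ f n) := by
  obtain ⟨ρ, hρ⟩ := Perm.exists_monoidHom_injective_GL ℂ n
  let e : Perm (Fin (n + 1)) ≃* ρ.range := MonoidHom.ofInjective hρ
  have hfin : Finite ρ.range := Finite.of_equiv _ e.toEquiv
  have hbound (A : Subgroup ρ.range) (_ : A.Normal) (_ : IsMulCommutative A) :
      (n + 1).factorial ≤ A.index := by
    have hsym (N : Subgroup (Perm (Fin (n + 1)))) (_ : N.Normal) (_ : IsMulCommutative N) :
        N = ⊥ :=
      Perm.eq_bot_of_normal_of_isMulCommutative (by rw [Nat.card_fin]; omega) N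
    rw [eq_bot_of_normal_of_isMulCommutative_of_mulEquiv e hsym A, index_bot,
      ← Nat.card_congr e.toEquiv, Nat.card_perm, Nat.card_fin]
  refine ⟨⟨ρ.range, hfin, hbound⟩, fun f hf ↦ ?_⟩
  obtain ⟨A, hAN, hAC, hAf⟩ := hf n (by omega) ρ.range hfin
  exact (hbound A hAN hAC).trans hAf
end
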